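/- For every integer n ≥ 0, m_{2n}(√2) = P_{2n+2} / ((2n+2)(2n+1)), where P_m denotes the m-th Pell number. -/

import Mathlib

/-!
Write `c n = λ^(-(n+1))`. Since `λ c (n+1) = c n`, we have `λ S = T + X₀` with
`T = ∑ c n X (n+1)`, which is independent of `X₀` and has the moments of `S`: the moments of the
partial sums depend only on the weights. Expanding `(T + X₀)^k` gives the recursion
`λ^k m_k = ∑ C(k,j) m_j E[X₀^(k-j)]`, which determines every moment from `m_0 = 1` because
`λ^k ≠ 1`. For `λ = √2` the numbers `E[X₀^k] P_(k+2) / ((k+2)(k+1))` satisfy the same recursion: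
after `C(k,j) (k+2)(k+1) = C(k+2,j+2) (j+2)(j+1)` it reduces to the even part
`((1+x)^K + (1-x)^K)/2` of the binomial expansion at `x = 1 ± √2`, where
`1 + x = ±√2 x` and `1 - x = ∓√2`.
-/

open MeasureTheory ProbabilityTheory Finset

/-- The Pell numbers `P_m = ((1+√2)^m - (1-√2)^m)/(2√2)` (as real numbers). -/
noncomputable def Pell (k : ℕ) : ℝ :=
  ((1 + Real.sqrt 2) ^ k - (1 - Real.sqrt 2) ^ k) / (2 * Real.sqrt 2)

open Filter Topology

noncomputable def rademacherMoment (k : ℕ) : ℝ := (1 + (-1) ^ k) / 2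

lemma rademacherMoment_mul_rademacherMoment_sub {j k : ℕ} (hjk : j ≤ k) :
    rademacherMoment j * rademacherMoment (k - j) = rademacherMoment k * rademacherMoment j := by
  obtain ⟨i, rfl⟩ := Nat.exists_eq_add_of_le hjk
  have h : ((-1 : ℝ) ^ j) ^ 2 = 1 := by rw [← pow_mul, mul_comm, pow_mul, neg_one_sq, one_pow]
  simp only [rademacherMoment, Nat.add_sub_cancel_left, pow_add]
  linear_combination (-1 / 4 * (-1 : ℝ) ^ i) * h

lemma sum_choose_mul_rademacherMoment_mul_pow (x : ℝ) (n : ℕ) :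
    ∑ i ∈ range (n + 1), (n.choose i : ℝ) * rademacherMoment i * x ^ i =
      ((1 + x) ^ n + (1 - x) ^ n) / 2 := by
  rw [add_comm 1 x, sub_eq_neg_add, add_pow, add_pow, ← sum_add_distrib, sum_div]
  refine sum_congr rfl fun i _ => ?_
  rw [neg_pow, rademacherMoment]
  ring

lemma choose_mul_add_two_mul_add_one (n k : ℕ) :
    n.choose k * ((n + 2) * (n + 1)) = (n + 2).choose (k + 2) * ((k + 2) * (k + 1)) := by
  have h₁ := Nat.add_one_mul_choose_eq n k
  have h₂ := Nat.add_one_mul_choose_eq (n + 1) (k + 1)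
  calc n.choose k * ((n + 2) * (n + 1)) = (n + 2) * ((n + 1) * n.choose k) := by ring
    _ = (n + 2).choose (k + 2) * ((k + 2) * (k + 1)) := by rw [h₁, ← mul_assoc, h₂]; ring

lemma eq_of_moment_recursion {l : ℝ} (hl : 1 < l) {r u v : ℕ → ℝ} (hr : r 0 = 1) (h0 : u 0 = v 0)
    (hu : ∀ k, l ^ k * u k = ∑ j ∈ range (k + 1), (k.choose j : ℝ) * u j * r (k - j))
    (hv : ∀ k, l ^ k * v k = ∑ j ∈ range (k + 1), (k.choose j : ℝ) * v j * r (k - j)) :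
    u = v := by
  funext k
  induction k using Nat.strong_induction_on with
  | _ k ih =>
    rcases Nat.eq_zero_or_pos k with rfl | hk
    · exact h0
    have hsum : ∑ j ∈ range k, (k.choose j : ℝ) * u j * r (k - j) =
        ∑ j ∈ range k, (k.choose j : ℝ) * v j * r (k - j) :=
      sum_congr rfl fun j hj => by rw [ih j (mem_range.mp hj)]
    have hlk : l ^ k - 1 ≠ 0 := sub_ne_zero.mpr (one_lt_pow₀ hl hk.ne').ne'
    have eu := hu k
    have ev := hv k
    rw [sum_range_succ, Nat.choose_self, Nat.sub_self, hr] at eu ev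
    apply mul_left_cancel₀ hlk
    linear_combination eu - ev + hsum

lemma Pell_zero : Pell 0 = 0 := by simp [Pell]

lemma Pell_two : Pell 2 = 2 := by
  have h : Real.sqrt 2 ≠ 0 := by positivity
  rw [Pell]; field_simp; ring

noncomputable def pellMoment (k : ℕ) : ℝ :=
  rademacherMoment k * Pell (k + 2) / ((k + 2) * (k + 1))

lemma pellMoment_zero : pellMoment 0 = 1 := by
  norm_num [pellMoment, rademacherMoment, Pell_two]

lemma two_mul_sum_choose_mul_rademacherMoment_mul_Pell (m : ℕ) :
    2 * ∑ i ∈ range (2 * m + 1), ((2 * m).choose i : ℝ) * rademacherMoment i * Pell i =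
      2 ^ m * Pell (2 * m) := by
  have hs : Real.sqrt 2 ^ 2 = 2 := Real.sq_sqrt (by norm_num)
  have hs0 : Real.sqrt 2 ≠ 0 := by positivity
  simp only [Pell, mul_div_assoc', ← sum_div, mul_sub, sum_sub_distrib,
    sum_choose_mul_rademacherMoment_mul_pow]
  have hc₁ : 1 + (1 + Real.sqrt 2) = Real.sqrt 2 * (1 + Real.sqrt 2) := by linear_combination -hs
  have hd₁ : 1 + (1 - Real.sqrt 2) = -Real.sqrt 2 * (1 - Real.sqrt 2) := by linear_combination -hs
  have h2m : Real.sqrt 2 ^ (2 * m) = 2 ^ m := by rw [pow_mul, hs]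
  have hev : Even (2 * m) := ⟨m, two_mul m⟩
  rw [hc₁, hd₁, sub_add_cancel_left, sub_sub_cancel, mul_pow, mul_pow, hev.neg_pow, h2m]
  ring

lemma pellMoment_recursion (k : ℕ) :
    Real.sqrt 2 ^ k * pellMoment k =
      ∑ j ∈ range (k + 1), (k.choose j : ℝ) * pellMoment j * rademacherMoment (k - j) := by
  have hterm : ∀ j ∈ range (k + 1), (k.choose j : ℝ) * pellMoment j * rademacherMoment (k - j) =
      rademacherMoment k / ((k + 2) * (k + 1)) *
        (((k + 2).choose (j + 2) : ℝ) * rademacherMoment (j + 2) * Pell (j + 2)) := by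
    intro j hj
    have hjk : j ≤ k := Nat.lt_succ_iff.mp (mem_range.mp hj)
    have hchoose : (k.choose j : ℝ) * ((k + 2) * (k + 1)) =
        (k + 2).choose (j + 2) * ((j + 2) * (j + 1)) := by
      exact_mod_cast choose_mul_add_two_mul_add_one k j
    have hρ : rademacherMoment (j + 2) = rademacherMoment j := by simp [rademacherMoment, pow_add]
    have hρk := rademacherMoment_mul_rademacherMoment_sub hjk
    rw [pellMoment, hρ]
    field_simp
    linear_combination (k.choose j : ℝ) * Pell (j + 2) * ((k + 2) * (k + 1)) * hρk +
      rademacherMoment k * rademacherMoment j * Pell (j + 2) * hchoose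
  have hshift :
      ∑ j ∈ range (k + 1), ((k + 2).choose (j + 2) : ℝ) * rademacherMoment (j + 2) * Pell (j + 2) =
        ∑ i ∈ range (k + 2 + 1), ((k + 2).choose i : ℝ) * rademacherMoment i * Pell i := by
    rw [sum_range_succ' _ (k + 2), sum_range_succ' _ (k + 1)]
    simp [Pell_zero, rademacherMoment]
  rw [sum_congr rfl hterm, ← mul_sum, hshift]
  rcases Nat.even_or_odd k with ⟨m, rfl⟩ | hodd
  · have h := two_mul_sum_choose_mul_rademacherMoment_mul_Pell (m + 1)
    rw [show 2 * (m + 1) = m + m + 2 by ring] at h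
    have hs : Real.sqrt 2 ^ (m + m) = 2 ^ m := by
      rw [← two_mul, pow_mul, Real.sq_sqrt zero_le_two]
    have hρ : rademacherMoment (m + m) = 1 := by simp [rademacherMoment, ← two_mul, pow_mul]
    rw [pellMoment, hs, hρ]
    push_cast
    field_simp
    linear_combination (-1 / 2 : ℝ) * h
  · simp [pellMoment, rademacherMoment, hodd.neg_one_pow]

section PartialSums

variable {Ω : Type*}

def partialSum (c : ℕ → ℝ) (Y : ℕ → Ω → ℝ) (N : ℕ) (ω : Ω) : ℝ := ∑ k ∈ range N, c k * Y k ω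

lemma abs_partialSum_le {c : ℕ → ℝ} {Y : ℕ → Ω → ℝ} {ω : Ω} (hω : ∀ n, |Y n ω| = 1) (N : ℕ) :
    |partialSum c Y N ω| ≤ ∑ k ∈ range N, |c k| :=
  (abs_sum_le_sum_abs _ _).trans_eq (sum_congr rfl fun k _ => by rw [abs_mul, hω, mul_one])

/-- The paper's `S(λ) = ∑_{n ≥ 1} λ^(-n) X_n`, with the sequence indexed from `0`. -/
noncomputable def bernoulliConvolution (l : ℝ) (Y : ℕ → Ω → ℝ) (ω : Ω) : ℝ :=
  ∑' n, (l ^ (n + 1))⁻¹ * Y n ω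

lemma mul_partialSum_inv_pow_succ {l : ℝ} (hl : l ≠ 0) (Y : ℕ → Ω → ℝ) (N : ℕ) (ω : Ω) :
    l * partialSum (fun n => (l ^ (n + 1))⁻¹) Y (N + 1) ω =
      partialSum (fun n => (l ^ (n + 1))⁻¹) (fun n => Y (n + 1)) N ω + Y 0 ω := by
  simp only [partialSum]
  rw [sum_range_succ', mul_add, mul_sum]
  congr 1
  · refine sum_congr rfl fun n _ => ?_
    field_simp
    ring
  · simp [hl]

end PartialSums

section Rademacher

variable {Ω : Type*} [MeasurableSpace Ω] {P : Measure Ω}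

structure IsRademacher (Y : Ω → ℝ) (P : Measure Ω) : Prop where
  measurable : Measurable Y
  measure_eq_one : P {ω | Y ω = 1} = 1 / 2
  measure_eq_neg_one : P {ω | Y ω = -1} = 1 / 2

lemma IsRademacher.ae_eq_one_or_neg_one [IsProbabilityMeasure P] {Y : Ω → ℝ}
    (hY : IsRademacher Y P) : ∀ᵐ ω ∂P, Y ω = 1 ∨ Y ω = -1 := by
  have h₁ : MeasurableSet {ω | Y ω = 1} := hY.measurable (measurableSet_singleton 1)
  have h₂ : MeasurableSet {ω | Y ω = -1} := hY.measurable (measurableSet_singleton (-1))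
  have hdisj : Disjoint {ω | Y ω = 1} {ω | Y ω = -1} :=
    Set.disjoint_left.mpr fun ω (h : Y ω = 1) (h' : Y ω = -1) => by norm_num [h] at h'
  refine (mem_ae_iff_prob_eq_one (h₁.union h₂)).mpr ?_
  rw [measure_union hdisj h₂, hY.measure_eq_one, hY.measure_eq_neg_one, ENNReal.add_halves]

lemma IsRademacher.integral_pow [IsProbabilityMeasure P] {Y : Ω → ℝ} (hY : IsRademacher Y P)
    (k : ℕ) : ∫ ω, Y ω ^ k ∂P = rademacherMoment k := by
  have h₁ : MeasurableSet {ω | Y ω = 1} := hY.measurable (measurableSet_singleton 1)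
  have h₂ : MeasurableSet {ω | Y ω = -1} := hY.measurable (measurableSet_singleton (-1))
  have hsplit : (fun ω => Y ω ^ k) =ᵐ[P] fun ω => {ω | Y ω = 1}.indicator (fun _ => (1 : ℝ)) ω +
      {ω | Y ω = -1}.indicator (fun _ => (-1) ^ k) ω := by
    filter_upwards [hY.ae_eq_one_or_neg_one] with ω hω
    rcases hω with h | h <;> norm_num [Set.indicator_apply, h]
  rw [integral_congr_ae hsplit,
    integral_add ((integrable_const _).indicator h₁) ((integrable_const _).indicator h₂),
    integral_indicator_const _ h₁, integral_indicator_const _ h₂, measureReal_def, measureReal_def,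
    hY.measure_eq_one, hY.measure_eq_neg_one, rademacherMoment]
  norm_num
  ring

lemma integrable_pow_of_ae_abs_le [IsFiniteMeasure P] {f : Ω → ℝ} {C : ℝ}
    (hf : AEStronglyMeasurable f P) (hC : ∀ᵐ ω ∂P, |f ω| ≤ C) (j : ℕ) :
    Integrable (fun ω => f ω ^ j) P :=
  Integrable.of_bound (hf.pow j) (C ^ j) <| hC.mono fun ω hω => by
    rw [Real.norm_eq_abs, abs_pow]
    exact pow_le_pow_left₀ (abs_nonneg _) hω j

lemma ProbabilityTheory.IndepFun.integral_add_pow {U V : Ω → ℝ} (hUV : IndepFun U V P)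
    (hU : ∀ j, Integrable (fun ω => U ω ^ j) P) (hV : ∀ j, Integrable (fun ω => V ω ^ j) P)
    (k : ℕ) :
    ∫ ω, (U ω + V ω) ^ k ∂P =
      ∑ j ∈ range (k + 1), (k.choose j : ℝ) * (∫ ω, U ω ^ j ∂P) * ∫ ω, V ω ^ (k - j) ∂P := by
  have hpow : ∀ i j, IndepFun (fun ω => U ω ^ i) (fun ω => V ω ^ j) P := fun i j =>
    hUV.comp (measurable_id.pow_const i) (measurable_id.pow_const j)
  simp_rw [add_pow]
  rw [integral_finsetSum _ fun j _ => by
    exact ((hpow j (k - j)).integrable_mul (hU j) (hV _)).mul_const _]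
  refine sum_congr rfl fun j _ => ?_
  have hmul := (hpow j (k - j)).integral_mul_eq_mul_integral (hU j).1 (hV _).1
  simp only [Pi.mul_apply] at hmul
  rw [integral_mul_const, hmul]
  ring

structure IsRademacherSeq (Y : ℕ → Ω → ℝ) (P : Measure Ω) : Prop where
  isRademacher : ∀ n, IsRademacher (Y n) P
  indep : iIndepFun Y P

namespace IsRademacherSeq

variable {Y : ℕ → Ω → ℝ}

lemma comp_succ (hY : IsRademacherSeq Y P) : IsRademacherSeq (fun n => Y (n + 1)) P :=
  ⟨fun n => hY.isRademacher (n + 1), hY.indep.precomp (add_left_injective 1)⟩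

lemma ae_abs_eq_one [IsProbabilityMeasure P] (hY : IsRademacherSeq Y P) :
    ∀ᵐ ω ∂P, ∀ n, |Y n ω| = 1 :=
  ae_all_iff.mpr fun n => (hY.isRademacher n).ae_eq_one_or_neg_one.mono fun ω hω => by
    rcases hω with h | h <;> simp [h]

lemma measurable_partialSum (hY : IsRademacherSeq Y P) (c : ℕ → ℝ) (N : ℕ) :
    Measurable (partialSum c Y N) :=
  Finset.measurable_sum _ fun k _ => (hY.isRademacher k).measurable.const_mul (c k)

lemma integrable_partialSum_pow [IsProbabilityMeasure P] (hY : IsRademacherSeq Y P) (c : ℕ → ℝ)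
    (N j : ℕ) : Integrable (fun ω => partialSum c Y N ω ^ j) P :=
  integrable_pow_of_ae_abs_le (hY.measurable_partialSum c N).aestronglyMeasurable
    (hY.ae_abs_eq_one.mono fun _ hω => abs_partialSum_le hω N) j

lemma integral_partialSum_succ_pow [IsProbabilityMeasure P] (hY : IsRademacherSeq Y P)
    (c : ℕ → ℝ) (N k : ℕ) :
    ∫ ω, partialSum c Y (N + 1) ω ^ k ∂P =
      ∑ j ∈ range (k + 1), (k.choose j : ℝ) * (∫ ω, partialSum c Y N ω ^ j ∂P) *
        (c N ^ (k - j) * rademacherMoment (k - j)) := by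
  have hindep : IndepFun (partialSum c Y N) (fun ω => c N * Y N ω) P := by
    have h := (hY.indep.comp (fun n x => c n * x) fun n => measurable_const_mul (c n))
      |>.indepFun_finsetSum_of_notMem (fun n => (hY.isRademacher n).measurable.const_mul (c n))
        (notMem_range_self (n := N))
    convert h using 1
    · funext ω
      simp [partialSum, Finset.sum_apply]
    · rfl
  have hV : ∀ i, ∫ ω, (c N * Y N ω) ^ i ∂P = c N ^ i * rademacherMoment i := fun i => by
    simp_rw [mul_pow]
    rw [integral_const_mul, (hY.isRademacher N).integral_pow]
  have hVint : ∀ i, Integrable (fun ω => (c N * Y N ω) ^ i) P :=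
    integrable_pow_of_ae_abs_le ((hY.isRademacher N).measurable.const_mul _).aestronglyMeasurable
      (hY.ae_abs_eq_one.mono fun ω hω => by rw [abs_mul, hω N, mul_one])
  have hsucc : partialSum c Y (N + 1) = fun ω => partialSum c Y N ω + c N * Y N ω := by
    funext ω
    exact sum_range_succ _ _
  rw [hsucc, hindep.integral_add_pow (hY.integrable_partialSum_pow c N) hVint]
  simp_rw [hV]

lemma integral_partialSum_pow_eq {Ω' : Type*} [MeasurableSpace Ω'] {P' : Measure Ω'}
    [IsProbabilityMeasure P] [IsProbabilityMeasure P'] {Y' : ℕ → Ω' → ℝ}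
    (hY : IsRademacherSeq Y P) (hY' : IsRademacherSeq Y' P') (c : ℕ → ℝ) (N k : ℕ) :
    ∫ ω, partialSum c Y N ω ^ k ∂P = ∫ ω, partialSum c Y' N ω ^ k ∂P' := by
  induction N generalizing k with
  | zero => simp [partialSum]
  | succ N ih => simp only [hY.integral_partialSum_succ_pow, hY'.integral_partialSum_succ_pow, ih]

lemma tendsto_integral_partialSum_pow [IsProbabilityMeasure P] (hY : IsRademacherSeq Y P)
    {c : ℕ → ℝ} (hc : Summable fun n => |c n|) (k : ℕ) :
    Tendsto (fun N => ∫ ω, partialSum c Y N ω ^ k ∂P) atTop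
      (𝓝 (∫ ω, (∑' n, c n * Y n ω) ^ k ∂P)) := by
  refine tendsto_integral_of_dominated_convergence (fun _ => (∑' n, |c n|) ^ k)
    (fun N => ((hY.measurable_partialSum c N).pow_const k).aestronglyMeasurable)
    (integrable_const _) (fun N => ?_) ?_
  · filter_upwards [hY.ae_abs_eq_one] with ω hω
    rw [Real.norm_eq_abs, abs_pow]
    exact pow_le_pow_left₀ (abs_nonneg _)
      ((abs_partialSum_le hω N).trans (hc.sum_le_tsum _ fun n _ => abs_nonneg _)) k
  · filter_upwards [hY.ae_abs_eq_one] with ω hω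
    have hsum : Summable fun n => c n * Y n ω :=
      Summable.of_norm (by simpa [abs_mul, hω] using hc)
    exact hsum.hasSum.tendsto_sum_nat.pow k

lemma indepFun_partialSum_comp_succ (hY : IsRademacherSeq Y P) (c : ℕ → ℝ) (N : ℕ) :
    IndepFun (partialSum c (fun n => Y (n + 1)) N) (Y 0) P := by
  set d : ℕ → ℝ := fun n => if n = 0 then 1 else c (n - 1)
  have h := (hY.indep.comp (fun n x => d n * x) fun n => measurable_const_mul (d n))
    |>.indepFun_finsetSum_of_notMem (fun n => (hY.isRademacher n).measurable.const_mul (d n))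
      (s := (range N).map (addRightEmbedding 1)) (i := 0) (by simp)
  convert h using 1
  · funext ω
    simp [partialSum, d, Finset.sum_apply]
  · funext ω
    simp [d]

theorem moment_recursion [IsProbabilityMeasure P] (hY : IsRademacherSeq Y P) {l : ℝ} (hl : 1 < l)
    (k : ℕ) :
    l ^ k * ∫ ω, bernoulliConvolution l Y ω ^ k ∂P =
      ∑ j ∈ range (k + 1), (k.choose j : ℝ) * (∫ ω, bernoulliConvolution l Y ω ^ j ∂P) *
        rademacherMoment (k - j) := by
  set c : ℕ → ℝ := fun n => (l ^ (n + 1))⁻¹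
  have hc : Summable fun n => |c n| := by
    have hr : Summable fun n => l⁻¹ ^ n :=
      summable_geometric_of_lt_one (by positivity) (inv_lt_one_of_one_lt₀ hl)
    refine ((summable_nat_add_iff 1).mpr hr).congr fun n => ?_
    simp [c, inv_pow, abs_of_pos (zero_lt_one.trans hl)]
  have hlim := hY.tendsto_integral_partialSum_pow hc
  have hY₀ : ∀ j, Integrable (fun ω => Y 0 ω ^ j) P :=
    integrable_pow_of_ae_abs_le (hY.isRademacher 0).measurable.aestronglyMeasurable
      (hY.ae_abs_eq_one.mono fun ω hω => (hω 0).le)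
  have hfin : ∀ N, l ^ k * ∫ ω, partialSum c Y (N + 1) ω ^ k ∂P =
      ∑ j ∈ range (k + 1), (k.choose j : ℝ) * (∫ ω, partialSum c Y N ω ^ j ∂P) *
        rademacherMoment (k - j) := fun N => by
    have hshift : ∀ ω, l * partialSum c Y (N + 1) ω =
        partialSum c (fun n => Y (n + 1)) N ω + Y 0 ω :=
      mul_partialSum_inv_pow_succ (zero_lt_one.trans hl).ne' Y N
    rw [← integral_const_mul]
    simp_rw [← mul_pow, hshift]
    rw [(hY.indepFun_partialSum_comp_succ c N).integral_add_pow
      (hY.comp_succ.integrable_partialSum_pow c N) hY₀]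
    simp_rw [(hY.isRademacher 0).integral_pow, hY.comp_succ.integral_partialSum_pow_eq hY]
  refine tendsto_nhds_unique (((hlim k).comp (tendsto_add_atTop_nat 1)).const_mul (l ^ k)) ?_
  exact (tendsto_finsetSum _ fun j _ => ((hlim j).const_mul _).mul_const _).congr
    fun N => (hfin N).symm

end IsRademacherSeq

end Rademacher

/-- `m_(2n)(√2) = P_(2n+2) / ((2n+2)(2n+1))`. -/
theorem stmt_16 {Ω : Type*} [MeasurableSpace Ω] (P : Measure Ω) [IsProbabilityMeasure P]
    (X : ℕ → Ω → ℝ) (hmeas : ∀ n, Measurable (X n))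
    (hindep : iIndepFun X P)
    (h1 : ∀ n, P {ω | X n ω = 1} = 1 / 2) (h2 : ∀ n, P {ω | X n ω = -1} = 1 / 2)
    (S : ℝ → Ω → ℝ)
    (hS : ∀ l : ℝ, 1 < l → ∀ ω, S l ω = ∑' n : ℕ, l ^ (-(n + 1 : ℤ)) * X n ω)
    (m : ℝ → ℕ → ℝ) (hm : ∀ l k, m l k = ∫ ω, (S l ω) ^ k ∂P)
    (n : ℕ) :
    m (Real.sqrt 2) (2 * n) = Pell (2 * n + 2) / ((2 * (n : ℝ) + 2) * (2 * (n : ℝ) + 1)) := by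
  have hX : IsRademacherSeq X P := ⟨fun n => ⟨hmeas n, h1 n, h2 n⟩, hindep⟩
  have hS₂ : S (Real.sqrt 2) = bernoulliConvolution (Real.sqrt 2) X := by
    funext ω
    rw [hS _ Real.one_lt_sqrt_two, bernoulliConvolution]
    refine tsum_congr fun k => ?_
    rw [zpow_neg]
    norm_cast
  have hmoments : m (Real.sqrt 2) = pellMoment := by
    refine eq_of_moment_recursion Real.one_lt_sqrt_two (r := rademacherMoment)
      (by norm_num [rademacherMoment]) (by simp [hm, pellMoment_zero]) (fun k => ?_)
      pellMoment_recursion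
    simp only [hm, hS₂]
    exact hX.moment_recursion Real.one_lt_sqrt_two k
  rw [hmoments, pellMoment, rademacherMoment, pow_mul, neg_one_sq, one_pow]
  push_cast
  ring
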